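/- Consider the signed grammar G over the one-letter alphabet {a} with nonterminals {S, A, B}, start symbol S, and productions S → A, S → B, A → −aA, A → λ, B → aaB, B → a (where the production A → −aA carries sign −1 and all other productions carry sign +1). Then G is admissible and generates the language (aa)* = { a^{2i} : i ≥ 0 }; explicitly, n_{aⁿ}(G) = 1 if n is even and n_{aⁿ}(G) = 0 if n is odd. -/

import Mathlib

/-- A parse-tree node: either a terminal leaf or an internal node labeled by a
nonterminal with a list of children. -/
inductive PTree (N : Type) (T : Type) : Type where
  | leaf (t : T) : PTree N T
  | node (A : N) (children : List (PTree N T)) : PTree N T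

namespace PTree

variable {N T : Type}

/-- The symbol (nonterminal or terminal) labeling the root of a tree. -/
def toSymbol : PTree N T → N ⊕ T
  | leaf t => Sum.inr t
  | node A _ => Sum.inl A

/-- The yield of a parse tree: the word spelled by its leaves. -/
def yield : PTree N T → List T
  | leaf t => [t]
  | node _ cs => cs.attach.flatMap (fun c => yield c.1)
decreasing_by simp only [PTree.node.sizeOf_spec]; have h := List.sizeOf_lt_of_mem c.2; omega

/-- The sign of a parse tree w.r.t. a sign assignment on productions:
the product of the signs of the productions used at its nodes. -/
def sign (σ : N × List (N ⊕ T) → ℤ) : PTree N T → ℤ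
  | leaf _ => 1
  | node A cs => σ (A, cs.map toSymbol) * (cs.attach.map (fun c => sign σ c.1)).prod
decreasing_by simp only [PTree.node.sizeOf_spec]; have h := List.sizeOf_lt_of_mem c.2; omega

/-- Validity of a parse tree w.r.t. a set of productions: at every internal node,
the node label together with the list of symbols of its children is a production. -/
inductive Valid (R : Set (N × List (N ⊕ T))) : PTree N T → Prop where
  | leaf (t : T) : Valid R (PTree.leaf t)
  | node (A : N) (cs : List (PTree N T)) :
      (A, cs.map toSymbol) ∈ R → (∀ c ∈ cs, Valid R c) → Valid R (PTree.node A cs)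

end PTree

/-- A signed grammar over a (finite) terminal alphabet `T`: a context-free grammar
with finitely many nonterminals and productions, together with a sign `1` or `-1`
attached to each production. -/
structure SignedGrammar (T : Type) : Type 1 where
  /-- the type of nonterminals -/
  N : Type
  finN : Finite N
  /-- the start symbol -/
  start : N
  /-- the productions `A → α`, `α ∈ (N ∪ T)*` -/
  rules : Set (N × List (N ⊕ T))
  finRules : rules.Finite
  /-- the sign of each production -/
  sign : N × List (N ⊕ T) → ℤ
  sign_valid : ∀ r ∈ rules, sign r = 1 ∨ sign r = -1

namespace SignedGrammar

variable {T : Type}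

/-- A parse tree over the grammar: a valid tree whose root is labeled by the start symbol. -/
def IsParseTree (G : SignedGrammar T) (t : PTree G.N T) : Prop :=
  PTree.Valid G.rules t ∧ t.toSymbol = Sum.inl G.start

/-- The set of parse trees over `G` with yield `w`. -/
def parseTreesOf (G : SignedGrammar T) (w : List T) : Set (PTree G.N T) :=
  {t | G.IsParseTree t ∧ t.yield = w}

/-- `G` is admissible if every word has only finitely many parse trees. -/
def Admissible (G : SignedGrammar T) : Prop :=
  ∀ w : List T, (G.parseTreesOf w).Finite

/-- `n_w(G)`: the sum of the signs of all parse trees over `G` with yield `w`. -/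
noncomputable def count (G : SignedGrammar T) (w : List T) : ℤ :=
  ∑ᶠ t ∈ G.parseTreesOf w, t.sign G.sign

/-- `G` generates the language `L` if `G` is admissible, `n_w(G) = 1` for every
`w ∈ L` and `n_w(G) = 0` for every `w ∉ L`. -/
def Generates (G : SignedGrammar T) (L : Language T) : Prop :=
  G.Admissible ∧ (∀ w ∈ L, G.count w = 1) ∧ (∀ w ∉ L, G.count w = 0)

/-- An ordinary context-free grammar: every production has sign `+1`. -/
def Ordinary (G : SignedGrammar T) : Prop :=
  ∀ r ∈ G.rules, G.sign r = 1

/-- The language generated by `G` in the usual sense: all yields of parse trees. -/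
def language (G : SignedGrammar T) : Language T :=
  {w | ∃ t : PTree G.N T, G.IsParseTree t ∧ t.yield = w}

/-- `G` is unambiguous if every word has at most one parse tree. -/
def Unambiguous (G : SignedGrammar T) : Prop :=
  ∀ t₁ t₂ : PTree G.N T, G.IsParseTree t₁ → G.IsParseTree t₂ →
    t₁.yield = t₂.yield → t₁ = t₂

/-- The number of parse trees of `G` with yield `w` (degree of ambiguity of `w`). -/
noncomputable def ambCount (G : SignedGrammar T) (w : List T) : ℕ :=
  Nat.card {t : PTree G.N T // t ∈ G.parseTreesOf w}

end SignedGrammar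


/-- Nonterminals `{S, A, B}`. -/
inductive NT11 : Type
  | S
  | A
  | B
deriving DecidableEq

instance : Fintype NT11 where
  elems := {NT11.S, NT11.A, NT11.B}
  complete := by intro x; cases x <;> simp

/-- The signed grammar over `{a}` (the single terminal being `() : Unit`) with
productions `S → A | B`, `A → -aA | λ`, `B → aaB | a`, where `A → -aA` has
sign `-1` and all other productions have sign `+1`. -/
def G11 : SignedGrammar Unit where
  N := NT11
  finN := inferInstance
  start := NT11.S
  rules := {(NT11.S, [Sum.inl NT11.A]),
            (NT11.S, [Sum.inl NT11.B]),
            (NT11.A, [Sum.inr (), Sum.inl NT11.A]),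
            (NT11.A, []),
            (NT11.B, [Sum.inr (), Sum.inr (), Sum.inl NT11.B]),
            (NT11.B, [Sum.inr ()])}
  finRules := Set.Finite.insert _ (Set.Finite.insert _ (Set.Finite.insert _
    (Set.Finite.insert _ (Set.Finite.insert _ (Set.finite_singleton _)))))
  sign := fun r => if r = (NT11.A, [Sum.inr (), Sum.inl NT11.A]) then -1 else 1
  sign_valid := by
    intro r _
    try dsimp only
    split
    · exact Or.inr rfl
    · exact Or.inl rfl

/-!
Every parse tree of `G11` is either `S → A → aA → ⋯ → aⁿA → aⁿ`, which has sign `(-1)ⁿ`,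
or `S → B → aaB → ⋯ → a²ᵏB → a²ᵏ⁺¹`, which has sign `+1`. Hence `aⁿ` has a single parse
tree, of sign `+1`, when `n` is even, and exactly two parse trees, of opposite signs, when
`n` is odd.
-/

namespace PTree

variable {N T : Type}

@[simp] lemma toSymbol_leaf (t : T) : (leaf t : PTree N T).toSymbol = .inr t := rfl

@[simp] lemma toSymbol_node (A : N) (cs : List (PTree N T)) : (node A cs).toSymbol = .inl A := rfl

@[simp] lemma yield_leaf (t : T) : (leaf t : PTree N T).yield = [t] := by
  rw [yield]

@[simp] lemma yield_node (A : N) (cs : List (PTree N T)) :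
    (node A cs).yield = cs.flatMap yield := by
  rw [yield]
  simp only [List.flatMap_subtype, List.unattach_attach]

@[simp] lemma sign_leaf (σ : N × List (N ⊕ T) → ℤ) (t : T) :
    (leaf t : PTree N T).sign σ = 1 := by
  rw [sign]

@[simp] lemma sign_node (σ : N × List (N ⊕ T) → ℤ) (A : N) (cs : List (PTree N T)) :
    (node A cs).sign σ = σ (A, cs.map toSymbol) * (cs.map (sign σ)).prod := by
  rw [sign]
  simp only [List.map_subtype, List.unattach_attach]

lemma eq_leaf_of_toSymbol_eq_inr {t : PTree N T} {a : T} (h : t.toSymbol = .inr a) :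
    t = leaf a := by
  cases t <;> simp_all

end PTree

lemma List.eq_replicate_length_of_subsingleton {α : Type*} [Subsingleton α] (l : List α) (a : α) :
    l = List.replicate l.length a :=
  List.eq_replicate_length.2 fun _ _ => Subsingleton.elim _ _

-- Lets `simp` and instance search see `G11.N` as `NT11`, so that trees over `NT11` are
-- trees over `G11`.
attribute [reducible] G11

namespace G11

open NT11 PTree

def aChain : ℕ → PTree NT11 Unit
  | 0 => node A []
  | n + 1 => node A [leaf (), aChain n]

def bChain : ℕ → PTree NT11 Unit
  | 0 => node B [leaf ()]
  | k + 1 => node B [leaf (), leaf (), bChain k]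

@[simp] lemma toSymbol_aChain (n : ℕ) : (aChain n).toSymbol = .inl A := by
  cases n <;> rfl

@[simp] lemma toSymbol_bChain (k : ℕ) : (bChain k).toSymbol = .inl B := by
  cases k <;> rfl

@[simp] lemma yield_aChain (n : ℕ) : (aChain n).yield = List.replicate n () := by
  induction n with
  | zero => simp [aChain]
  | succ n ih => simp [aChain, ih, List.replicate_succ]

@[simp] lemma yield_bChain (k : ℕ) : (bChain k).yield = List.replicate (2 * k + 1) () := by
  induction k with
  | zero => simp [bChain]
  | succ k ih => simp [bChain, ih, List.replicate_succ, Nat.mul_succ]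

lemma sign_aChain (n : ℕ) : (aChain n).sign G11.sign = (-1) ^ n := by
  induction n with
  | zero => simp [aChain]
  | succ n ih => simp [aChain, ih, pow_succ]

lemma sign_bChain (k : ℕ) : (bChain k).sign G11.sign = 1 := by
  induction k with
  | zero => simp [bChain]
  | succ k ih => simp [bChain, ih]

lemma valid_aChain (n : ℕ) : Valid G11.rules (aChain n) := by
  induction n with
  | zero => exact .node _ _ (by simp) (by simp)
  | succ n ih => exact .node _ _ (by simp) (by simp [ih, Valid.leaf])

lemma valid_bChain (k : ℕ) : Valid G11.rules (bChain k) := by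
  induction k with
  | zero => exact .node _ _ (by simp) (by simp [Valid.leaf])
  | succ k ih => exact .node _ _ (by simp) (by simp [ih, Valid.leaf])

lemma exists_eq_aChain {t : PTree NT11 Unit} (ht : Valid G11.rules t) (hA : t.toSymbol = .inl A) :
    ∃ n, t = aChain n := by
  induction ht with
  | leaf => simp at hA
  | node X cs hr _ ih =>
    obtain rfl : X = A := by simpa using hA
    have hcs : cs.map toSymbol = [.inr (), .inl A] ∨ cs.map toSymbol = [] := by simpa using hr
    rcases hcs with hcs | hcs
    · rcases cs with _ | ⟨c₁, _ | ⟨c₂, _ | _⟩⟩ <;> simp at hcs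
      obtain ⟨n, rfl⟩ := ih c₂ (by simp) hcs.2
      exact ⟨n + 1, by rw [eq_leaf_of_toSymbol_eq_inr hcs.1, aChain]⟩
    · exact ⟨0, by rw [List.map_eq_nil_iff.1 hcs, aChain]⟩

lemma exists_eq_bChain {t : PTree NT11 Unit} (ht : Valid G11.rules t) (hB : t.toSymbol = .inl B) :
    ∃ k, t = bChain k := by
  induction ht with
  | leaf => simp at hB
  | node X cs hr _ ih =>
    obtain rfl : X = B := by simpa using hB
    have hcs : cs.map toSymbol = [.inr (), .inr (), .inl B] ∨ cs.map toSymbol = [.inr ()] := by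
      simpa using hr
    rcases hcs with hcs | hcs
    · rcases cs with _ | ⟨c₁, _ | ⟨c₂, _ | ⟨c₃, _ | _⟩⟩⟩ <;> simp at hcs
      obtain ⟨k, rfl⟩ := ih c₃ (by simp) hcs.2.2
      rw [eq_leaf_of_toSymbol_eq_inr hcs.1, eq_leaf_of_toSymbol_eq_inr hcs.2.1]
      exact ⟨k + 1, rfl⟩
    · rcases cs with _ | ⟨c₁, _ | _⟩ <;> simp at hcs
      exact ⟨0, by rw [eq_leaf_of_toSymbol_eq_inr hcs, bChain]⟩

lemma aChain_ne_bChain (n k : ℕ) : aChain n ≠ bChain k :=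
  fun h => by simpa using congrArg toSymbol h

lemma isParseTree_iff {t : PTree G11.N Unit} :
    G11.IsParseTree t ↔ (∃ n, t = node S [aChain n]) ∨ ∃ k, t = node S [bChain k] := by
  constructor
  · rintro ⟨ht, hS⟩
    cases ht with
    | leaf => simp at hS
    | node X cs hr hcs =>
      obtain rfl : X = S := by simpa using hS
      have hcs' : cs.map toSymbol = [.inl A] ∨ cs.map toSymbol = [.inl B] := by simpa using hr
      rcases hcs' with h | h <;> rcases cs with _ | ⟨c, _ | _⟩ <;> simp at h
      · exact .inl ((exists_eq_aChain (hcs c (by simp)) h).imp fun n hn => by rw [hn])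
      · exact .inr ((exists_eq_bChain (hcs c (by simp)) h).imp fun k hk => by rw [hk])
  · rintro (⟨n, rfl⟩ | ⟨k, rfl⟩)
    · exact ⟨.node _ _ (by simp) (by simpa using valid_aChain n), rfl⟩
    · exact ⟨.node _ _ (by simp) (by simpa using valid_bChain k), rfl⟩

lemma mem_parseTreesOf_replicate {n : ℕ} {t : PTree G11.N Unit} :
    t ∈ G11.parseTreesOf (List.replicate n ()) ↔
      t = node S [aChain n] ∨ ∃ k, 2 * k + 1 = n ∧ t = node S [bChain k] := by
  simp only [SignedGrammar.parseTreesOf, Set.mem_ofPred_eq, isParseTree_iff]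
  constructor
  · rintro ⟨⟨m, rfl⟩ | ⟨k, rfl⟩, hy⟩
    · obtain rfl : m = n := by simpa using hy
      exact .inl rfl
    · exact .inr ⟨k, by simpa using hy, rfl⟩
  · rintro (rfl | ⟨k, rfl, rfl⟩) <;> simp

lemma parseTreesOf_replicate_two_mul (k : ℕ) :
    G11.parseTreesOf (List.replicate (2 * k) ()) = {node S [aChain (2 * k)]} := by
  ext t
  rw [mem_parseTreesOf_replicate]
  simp only [Set.mem_singleton_iff, or_iff_left_iff_imp]
  rintro ⟨j, hj, -⟩
  omega

lemma parseTreesOf_replicate_two_mul_add_one (k : ℕ) :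
    G11.parseTreesOf (List.replicate (2 * k + 1) ()) =
      {node S [aChain (2 * k + 1)], node S [bChain k]} := by
  ext t
  rw [mem_parseTreesOf_replicate, Set.mem_insert_iff, Set.mem_singleton_iff]
  constructor
  · rintro (h | ⟨j, hj, rfl⟩)
    · exact .inl h
    · exact .inr (by rw [show j = k by omega])
  · rintro (h | rfl)
    · exact .inl h
    · exact .inr ⟨k, rfl, rfl⟩

lemma sign_node_start (c : PTree NT11 Unit) : (node S [c]).sign G11.sign = c.sign G11.sign := by
  simp

lemma count_replicate (n : ℕ) : G11.count (List.replicate n ()) = if Even n then 1 else 0 := by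
  obtain ⟨k, rfl | rfl⟩ := n.even_or_odd'
  · rw [SignedGrammar.count, parseTreesOf_replicate_two_mul, finsum_mem_singleton,
      sign_node_start, sign_aChain, if_pos (even_two_mul k), (even_two_mul k).neg_one_pow]
  · have hne : node S [aChain (2 * k + 1)] ≠ node S [bChain k] := by
      simpa using aChain_ne_bChain (2 * k + 1) k
    rw [SignedGrammar.count, parseTreesOf_replicate_two_mul_add_one, finsum_mem_pair hne,
      sign_node_start, sign_node_start, sign_aChain, sign_bChain,
      (odd_two_mul_add_one k).neg_one_pow,
      if_neg (Nat.not_even_iff_odd.2 (odd_two_mul_add_one k)), neg_add_cancel]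

lemma admissible : G11.Admissible := by
  intro w
  rw [List.eq_replicate_length_of_subsingleton w ()]
  obtain ⟨k, hk | hk⟩ := w.length.even_or_odd'
  · rw [hk, parseTreesOf_replicate_two_mul]
    exact Set.finite_singleton _
  · rw [hk, parseTreesOf_replicate_two_mul_add_one]
    exact (Set.finite_singleton _).insert _

end G11

/-- `G11` is admissible and generates the language `(aa)*`; explicitly,
`n_{aⁿ}(G11) = 1` if `n` is even and `n_{aⁿ}(G11) = 0` if `n` is odd. -/
theorem G11_generates :
    G11.Generates {w : List Unit | ∃ i : ℕ, w = List.replicate (2 * i) ()} ∧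
    ∀ n : ℕ, G11.count (List.replicate n ()) = if Even n then 1 else 0 := by
  refine ⟨⟨G11.admissible, ?_, ?_⟩, G11.count_replicate⟩
  · rintro w ⟨i, rfl⟩
    simp [G11.count_replicate]
  · intro w hw
    rw [List.eq_replicate_length_of_subsingleton w (), G11.count_replicate, if_neg]
    rintro ⟨i, hi⟩
    exact hw ⟨i, by rw [List.eq_replicate_length_of_subsingleton w (), hi, two_mul]⟩
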